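/- arXiv:1407.4054 — 3 statements merged into one kernel-verified Lean document; each statement's English description precedes it below -/
import Mathlib

section
/- For any two finite sequences D and X of positive integers (with X nonempty), ⟨D,X⟩ = (1 + [⟵D]·[X]) · ⟨D⟩ · ⟨X⟩, where ⟵D denotes the reversal of D, and [Y] denotes the value of the continued fraction with partial quotients Y (with [∅] = 0). -/
/-! Euler's concatenation rule `⟨D,X⟩ = ⟨D⟩⟨X⟩ + ⟨D.dropLast⟩⟨X.tail⟩` reduces the
formula to the quotients `[X] = ⟨X.tail⟩/⟨X⟩` and, by the mirror symmetry `⟨⟵D⟩ = ⟨D⟩`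
of continuants, `[⟵D] = ⟨D.dropLast⟩/⟨D⟩`. -/

/-- Continuant of a list of naturals: `cont [] = 1`, `cont [d] = d`,
`cont (d₁,…,d_k) = d₁·cont (d₂,…,d_k) + cont (d₃,…,d_k)`. -/
def cont : List ℕ → ℕ
  | [] => 1
  | [d] => d
  | d :: e :: rest => d * cont (e :: rest) + cont rest

/-- Value of the finite continued fraction `[d₁,…,d_k] = 1/(d₁+1/(d₂+⋯+1/d_k))`,
with `cfv [] = 0`. -/
noncomputable def cfv : List ℕ → ℝ
  | [] => 0
  | d :: rest => 1 / (d + cfv rest)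

theorem cont_cons_of_ne_nil (d : ℕ) {L : List ℕ} (hL : L ≠ []) :
    cont (d :: L) = d * cont L + cont L.tail := by
  obtain ⟨e, L, rfl⟩ := List.exists_cons_of_ne_nil hL
  rfl

theorem cont_append {X : List ℕ} (hX : X ≠ []) :
    ∀ {D : List ℕ}, D ≠ [] → cont (D ++ X) = cont D * cont X + cont D.dropLast * cont X.tail
  | [d], _ => by simp [cont_cons_of_ne_nil d hX, cont]
  | d :: e :: rest, _ => by
    have ih := cont_append hX (D := e :: rest) (List.cons_ne_nil _ _)
    have hcons : cont (d :: e :: rest ++ X) = d * cont (e :: rest ++ X) + cont (rest ++ X) :=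
      rfl
    rcases eq_or_ne rest [] with rfl | hrest
    · simp only [hcons, ih, List.nil_append, cont, List.dropLast_singleton,
        List.dropLast_cons_cons]
      ring
    · obtain ⟨f, rest', rfl⟩ := List.exists_cons_of_ne_nil hrest
      have ih' := cont_append hX hrest
      simp only [hcons, ih, ih', List.dropLast_cons_cons, cont]
      ring

theorem cont_pos : ∀ {L : List ℕ}, (∀ d ∈ L, 0 < d) → 0 < cont L
  | [], _ => Nat.one_pos
  | [d], h => h d List.mem_cons_self
  | d :: e :: rest, h => by
    have hd := h d List.mem_cons_self
    have hrest := cont_pos (L := e :: rest) fun a ha => h a (List.mem_cons_of_mem d ha)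
    show 0 < d * cont (e :: rest) + cont rest
    positivity

theorem cont_reverse : ∀ L : List ℕ, cont L.reverse = cont L
  | [] => rfl
  | [_] => rfl
  | d :: e :: rest => by
    rw [List.reverse_cons, cont_append (List.cons_ne_nil _ _) (List.reverse_ne_nil_iff.mpr
      (List.cons_ne_nil _ _)), List.dropLast_reverse, cont_reverse (e :: rest), List.tail_cons,
      cont_reverse rest]
    simp only [cont, List.tail_cons]
    ring

theorem cfv_eq_div : ∀ {L : List ℕ}, L ≠ [] → (∀ d ∈ L, 0 < d) →
    cfv L = cont L.tail / cont L
  | [x], _, _ => by simp [cfv, cont]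
  | x :: y :: rest, _, hpos => by
    have hy : ∀ d ∈ y :: rest, 0 < d := fun a ha => hpos a (List.mem_cons_of_mem x ha)
    have hcont : (0 : ℝ) < cont (y :: rest) := by exact_mod_cast cont_pos hy
    rw [cfv, cfv_eq_div (List.cons_ne_nil _ _) hy, cont_cons_of_ne_nil x (List.cons_ne_nil _ _)]
    simp only [List.tail_cons]
    push_cast
    field_simp

theorem cfv_reverse_eq_div {L : List ℕ} (hL : L ≠ []) (hpos : ∀ d ∈ L, 0 < d) :
    cfv L.reverse = cont L.dropLast / cont L := by
  rw [cfv_eq_div (List.reverse_ne_nil_iff.mpr hL) (fun d hd => hpos d (List.mem_reverse.mp hd)),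
    List.tail_reverse, cont_reverse, cont_reverse]

theorem continuant_concat_formula (D X : List ℕ)
    (hD : ∀ d ∈ D, 0 < d) (hX : ∀ d ∈ X, 0 < d) (hXne : X ≠ []) :
    (cont (D ++ X) : ℝ) = (1 + cfv D.reverse * cfv X) * cont D * cont X := by
  rcases eq_or_ne D [] with rfl | hDne
  · simp [cfv, cont]
  have hDpos : (0 : ℝ) < cont D := by exact_mod_cast cont_pos hD
  have hXpos : (0 : ℝ) < cont X := by exact_mod_cast cont_pos hX
  rw [cont_append hXne hDne, cfv_reverse_eq_div hDne hD, cfv_eq_div hXne hX]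
  push_cast
  field_simp
end

section
/- Let A ≥ 2 be an integer, and let T and W be nonempty finite sequences of integers from {1,…,A} of equal length whose first elements differ. Then |[W] − [T]| ≥ 1/(2A³). -/
lemma cfv_nonneg : ∀ L : List ℕ, 0 ≤ cfv L
  | [] => le_rfl
  | d :: L => by
    have := cfv_nonneg L
    rw [cfv]
    positivity

lemma cfv_le_one {L : List ℕ} (hL : ∀ d ∈ L, 1 ≤ d) : cfv L ≤ 1 := by
  cases L with
  | nil => simp [cfv]
  | cons d L =>
    have hd : (1 : ℝ) ≤ d := by exact_mod_cast hL d List.mem_cons_self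
    rw [cfv, div_le_one (by linarith [cfv_nonneg L])]
    linarith [cfv_nonneg L]

lemma one_div_add_one_le_cfv_cons {A d : ℕ} {L : List ℕ} (hd : 1 ≤ d) (hdA : d ≤ A)
    (hL : ∀ x ∈ L, 1 ≤ x) : 1 / ((A : ℝ) + 1) ≤ cfv (d :: L) := by
  have hd' : (1 : ℝ) ≤ d := by exact_mod_cast hd
  have hdA' : (d : ℝ) ≤ A := by exact_mod_cast hdA
  rw [cfv]
  exact one_div_le_one_div_of_le (by linarith [cfv_nonneg L]) (by linarith [cfv_le_one hL])

lemma one_div_sub_one_div_add_le {A b ρ r : ℝ} (hb : 0 < b) (hbA : b ≤ A) (hρ : 0 ≤ ρ)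
    (hρr : ρ ≤ r) : 1 / A - 1 / (A + ρ) ≤ 1 / b - 1 / (b + r) := by
  have hA : 0 < A := hb.trans_le hbA
  have h_mono_r : 1 / (b + r) ≤ 1 / (b + ρ) :=
    one_div_le_one_div_of_le (by positivity) (by linarith)
  have h_anti_b : ρ / (A * (A + ρ)) ≤ ρ / (b * (b + ρ)) :=
    div_le_div_of_nonneg_left hρ (by positivity) (by gcongr)
  have hAρ : 1 / A - 1 / (A + ρ) = ρ / (A * (A + ρ)) := by field_simp; ring
  have hbρ : 1 / b - 1 / (b + ρ) = ρ / (b * (b + ρ)) := by field_simp; ring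
  linarith

lemma one_div_sub_one_div_ge_of_lt {A a b : ℕ} (ha : 1 ≤ a) (hab : a < b) (hbA : b ≤ A) :
    1 / ((A : ℝ) * (A ^ 2 + A + 1)) ≤ 1 / (a : ℝ) - 1 / b := by
  have ha' : (1 : ℝ) ≤ a := by exact_mod_cast ha
  have hab' : (a : ℝ) + 1 ≤ b := by exact_mod_cast hab
  have hbA' : (b : ℝ) ≤ A := by exact_mod_cast hbA
  have hb : (0 : ℝ) < b := by linarith
  have hab_le : (a : ℝ) * b ≤ A * (A ^ 2 + A + 1) := by nlinarith
  calc 1 / ((A : ℝ) * (A ^ 2 + A + 1)) ≤ 1 / (a * b) :=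
        one_div_le_one_div_of_le (by positivity) hab_le
    _ ≤ (b - a) / (a * b) := by gcongr; linarith
    _ = 1 / (a : ℝ) - 1 / b := by field_simp

lemma cfv_cons_sub_cfv_cons_ge_of_lt {A a b : ℕ} {T W : List ℕ} (ha : 1 ≤ a) (hab : a < b)
    (hbA : b ≤ A) (hT : ∀ d ∈ T, 1 ≤ d) (hW : ∀ d ∈ W, 1 ≤ d ∧ d ≤ A)
    (hlen : T.length = W.length) :
    1 / ((A : ℝ) * (A ^ 2 + A + 1)) ≤ cfv (a :: T) - cfv (b :: W) := by
  cases W with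
  | nil =>
    obtain rfl : T = [] := List.eq_nil_of_length_eq_zero hlen
    simpa [cfv] using one_div_sub_one_div_ge_of_lt ha hab hbA
  | cons e W =>
    have ha' : (1 : ℝ) ≤ a := by exact_mod_cast ha
    have hab' : (a : ℝ) + 1 ≤ b := by exact_mod_cast hab
    have hbA' : (b : ℝ) ≤ A := by exact_mod_cast hbA
    have hW_tail : 1 / ((A : ℝ) + 1) ≤ cfv (e :: W) :=
      one_div_add_one_le_cfv_cons (hW e List.mem_cons_self).1 (hW e List.mem_cons_self).2
        fun x hx => (hW x (List.mem_cons_of_mem e hx)).1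
    have hT_head : 1 / (b : ℝ) ≤ cfv (a :: T) := by
      rw [cfv]
      exact one_div_le_one_div_of_le (by linarith [cfv_nonneg T]) (by linarith [cfv_le_one hT])
    have h_extremal : 1 / (A : ℝ) - 1 / (A + 1 / (A + 1)) = 1 / (A * (A ^ 2 + A + 1)) := by
      have : (0 : ℝ) < A := by linarith
      field_simp
      ring
    have := one_div_sub_one_div_add_le (by linarith) hbA' (by positivity) hW_tail
    rw [cfv.eq_2 b]
    linarith

lemma one_div_two_mul_pow_three_le {A : ℝ} (hA : 2 ≤ A) :
    1 / (2 * A ^ 3) ≤ 1 / (A * (A ^ 2 + A + 1)) :=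
  one_div_le_one_div_of_le (by positivity) (by nlinarith)

theorem cfv_first_elements_differ (A : ℕ) (hA : 2 ≤ A) (T W : List ℕ)
    (hTne : T ≠ []) (hWne : W ≠ [])
    (hT : ∀ d ∈ T, 1 ≤ d ∧ d ≤ A) (hW : ∀ d ∈ W, 1 ≤ d ∧ d ≤ A)
    (hlen : T.length = W.length) (hhead : T.head hTne ≠ W.head hWne) :
    1 / (2 * (A : ℝ) ^ 3) ≤ |cfv W - cfv T| := by
  obtain ⟨a, T, rfl⟩ := List.exists_cons_of_ne_nil hTne
  obtain ⟨b, W, rfl⟩ := List.exists_cons_of_ne_nil hWne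
  simp only [List.head_cons] at hhead
  simp only [List.length_cons, add_left_inj] at hlen
  have hT' : ∀ d ∈ T, 1 ≤ d ∧ d ≤ A := fun d hd => hT d (List.mem_cons_of_mem a hd)
  have hW' : ∀ d ∈ W, 1 ≤ d ∧ d ≤ A := fun d hd => hW d (List.mem_cons_of_mem b hd)
  have ha := hT a List.mem_cons_self
  have hb := hW b List.mem_cons_self
  refine (one_div_two_mul_pow_three_le (by exact_mod_cast hA)).trans ?_
  rcases hhead.lt_or_gt with hab | hba
  · rw [abs_sub_comm]
    exact (cfv_cons_sub_cfv_cons_ge_of_lt ha.1 hab hb.2 (fun d hd => (hT' d hd).1) hW' hlen).trans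
      (le_abs_self _)
  · exact (cfv_cons_sub_cfv_cons_ge_of_lt hb.1 hba ha.2 (fun d hd => (hW' d hd).1) hT'
      hlen.symm).trans (le_abs_self _)
end

section
/- Let W be a nonempty finite set and f : W → ℝ≥0. Then for any ε > 0, ∑_{θ∈W} f(θ)² ≤ C(ε)·|W|^ε · max over nonempty subsets Z ⊆ W of (1/|Z|)·(∑_{θ∈Z} f(θ))², for some constant C(ε) depending only on ε. -/
/-!
Remove an element `a` at which `f` is smallest: then `f a` is at most the mean of `f` over the
current set `s`, so `f a ^ 2 ≤ M / #s` where `M` bounds `(∑_Z f)² / #Z`. Inducting, `∑ f²` is at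
most `M` times the harmonic number `H_{#W} ≤ 1 + log #W ≤ C(ε) #W ^ ε`; and `M` can be taken to be
the value of `(∑_Z f)² / #Z` at a maximising `Z`.
-/

open Finset Real

theorem sum_sq_le_mul_harmonic {α : Type*} (W : Finset α) (f : α → ℝ) (M : ℝ)
    (hf : ∀ x ∈ W, 0 ≤ f x) (hM : ∀ Z ⊆ W, (∑ θ ∈ Z, f θ) ^ 2 ≤ M * #Z) :
    ∑ θ ∈ W, f θ ^ 2 ≤ M * harmonic #W := by
  classical
  induction W using Finset.induction_on_min_value f with
  | empty => simp
  | insert a s ha hmin ih =>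
    have hcard : (#(insert a s) : ℝ) = #s + 1 := by rw [card_insert_of_notMem ha]; push_cast; ring
    have hmean : #(insert a s) * f a ≤ ∑ θ ∈ insert a s, f θ := by
      simpa using card_nsmul_le_sum (insert a s) f (f a) fun x hx ↦ by
        rcases mem_insert.1 hx with rfl | hx
        exacts [le_rfl, hmin x hx]
    have hsq : (#(insert a s) * f a) ^ 2 ≤ M * #(insert a s) :=
      (pow_le_pow_left₀ (mul_nonneg (Nat.cast_nonneg _) (hf a (mem_insert_self a s))) hmean 2).trans
        (hM _ subset_rfl)
    have hfa : f a ^ 2 ≤ M * ((#s : ℝ) + 1)⁻¹ := by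
      rw [hcard] at hsq
      rw [← div_eq_mul_inv, le_div_iff₀ (by positivity)]
      nlinarith [sq_nonneg (f a)]
    have hs := ih (fun x hx ↦ hf x (mem_insert_of_mem hx))
      (fun Z hZ ↦ hM Z (hZ.trans (subset_insert a s)))
    rw [sum_insert ha, card_insert_of_notMem ha, harmonic_succ]
    push_cast
    linarith

theorem one_add_log_le_mul_rpow {x ε : ℝ} (hx : 1 ≤ x) (hε : 0 < ε) :
    1 + log x ≤ (1 + 1 / ε) * x ^ ε := by
  have h₁ : 1 ≤ x ^ ε := one_le_rpow hx hε.le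
  have h₂ : log x ≤ x ^ ε / ε := log_le_rpow_div (by linarith) hε
  calc 1 + log x ≤ x ^ ε + x ^ ε / ε := by linarith
    _ = (1 + 1 / ε) * x ^ ε := by ring

theorem exists_subset_forall_sq_sum_le {α : Type*} (W : Finset α) (hW : W.Nonempty)
    (f : α → ℝ) : ∃ Z ⊆ W, Z.Nonempty ∧
      ∀ Y ⊆ W, (∑ θ ∈ Y, f θ) ^ 2 ≤ (1 / (#Z : ℝ)) * (∑ θ ∈ Z, f θ) ^ 2 * #Y := by
  classical
  obtain ⟨Z, hZ, hmax⟩ := exists_max_image {Z ∈ W.powerset | Z.Nonempty}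
    (fun Z ↦ (1 / (#Z : ℝ)) * (∑ θ ∈ Z, f θ) ^ 2) ⟨W, by simp [hW]⟩
  simp only [mem_filter, mem_powerset] at hZ hmax
  refine ⟨Z, hZ.1, hZ.2, fun Y hY ↦ ?_⟩
  rcases Y.eq_empty_or_nonempty with rfl | hY₀
  · simp
  have hcard : (0 : ℝ) < #Y := by exact_mod_cast hY₀.card_pos
  have hYmax := hmax Y ⟨hY, hY₀⟩
  rwa [one_div_mul_eq_div, div_le_iff₀ hcard] at hYmax

theorem konyagin_inequality (ε : ℝ) (hε : 0 < ε) :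
    ∃ C : ℝ, 0 < C ∧ ∀ (α : Type) (W : Finset α) (f : α → ℝ),
      W.Nonempty → (∀ x ∈ W, 0 ≤ f x) →
      ∃ Z ⊆ W, Z.Nonempty ∧
        ∑ θ ∈ W, f θ ^ 2 ≤
          C * (W.card : ℝ) ^ ε * ((1 / (Z.card : ℝ)) * (∑ θ ∈ Z, f θ) ^ 2) := by
  refine ⟨1 + 1 / ε, by positivity, fun α W f hW hf ↦ ?_⟩
  obtain ⟨Z, hZW, hZ, hmax⟩ := exists_subset_forall_sq_sum_le W hW f
  refine ⟨Z, hZW, hZ, ?_⟩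
  have hW₁ : (1 : ℝ) ≤ #W := by exact_mod_cast hW.card_pos
  calc ∑ θ ∈ W, f θ ^ 2 ≤ (1 / (#Z : ℝ)) * (∑ θ ∈ Z, f θ) ^ 2 * harmonic #W :=
        sum_sq_le_mul_harmonic W f _ hf hmax
    _ ≤ (1 / (#Z : ℝ)) * (∑ θ ∈ Z, f θ) ^ 2 * ((1 + 1 / ε) * (#W : ℝ) ^ ε) := by
        gcongr
        exact (harmonic_le_one_add_log _).trans (one_add_log_le_mul_rpow hW₁ hε)
    _ = (1 + 1 / ε) * (#W : ℝ) ^ ε * ((1 / (#Z : ℝ)) * (∑ θ ∈ Z, f θ) ^ 2) := by ring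
end
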